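/- Let m = ⊕_{i ≤ -2} g(i) ⊕ g(-1)' and m' = m (if dim g(-1)_1̄ is even) or m ⊕ C·v (if dim g(-1)_1̄ is odd, where v spans the orthogonal complement of g(-1)'_1̄ ⊕ (g(-1)_1̄ ∩ (g(-1)'_1̄)^⊥ minus v)). Then the annihilator m^⊥ = {y ∈ g : (y, m) = 0} decomposes as a direct sum m^⊥ = [m', e] ⊕ g^f, where g^f is the centralizer of f in g. -/

import Mathlib

/-!
Grade by the eigenvalues of `ad h`. The invariant form pairs `g(i)` only with `g(-i)`, so `m^⊥`
consists of all degrees `≤ 0` together with the part of `g(1)` orthogonal to `g(-1)'`. The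
`sl₂`-theory of the finite grading gives `g(i) = [e, g(i-2)] + g^f` for `i ≤ 1`, puts `g^f` in
degrees `≤ 0`, makes `ad e : g(-1) → g(1)` bijective and `ad f ∘ ad e` injective in negative
degrees (whence the sum is direct). It remains to see that `[e, m'] ∩ g(1)` is exactly the part
of `g(1)` orthogonal to `g(-1)'`, i.e. that `m' ∩ g(-1)` is the `⟨·,·⟩`-orthogonal of `g(-1)'`.
The form `⟨·,·⟩` is skew on `g(-1)_0` and symmetric and nondegenerate on `g(-1)_1`, so maximality
of `g(-1)'` forces its even part to be its own orthogonal, and makes `g(-1)'_1` a maximal isotropic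
subspace of a complex quadratic space; its orthogonal exceeds it by at most one anisotropic line,
and not at all in even dimension.
-/

/-- The annihilator `m^⊥ = {y ∈ g : (y, m) = 0}` of a subspace `m` with respect to a
bilinear form `B`. -/
def perpSubmodule {L : Type*} [AddCommGroup L] [Module ℂ L]
    (B : L →ₗ[ℂ] L →ₗ[ℂ] ℂ) (m : Submodule ℂ L) : Submodule ℂ L where
  carrier := {x | ∀ y ∈ m, B x y = 0}
  add_mem' := by
    intro x x' hx hx' y hy
    simp only [Set.mem_setOf_eq] at hx hx'
    simp [map_add, hx y hy, hx' y hy]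
  zero_mem' := by
    intro y hy
    simp
  smul_mem' := by
    intro c x hx y hy
    simp only [Set.mem_setOf_eq] at hx
    simp [hx y hy]


namespace DirectSum

section

variable {ι R V : Type*} [DecidableEq ι] [CommRing R] [AddCommGroup V] [Module R V]
  (g : ι → Submodule R V) [Decomposition g]

theorem mem_biSup_of_decompose_eq_zero {S : Set ι} {x : V}
    (hx : ∀ j ∉ S, (decompose g x j : V) = 0) : x ∈ ⨆ i ∈ S, g i := by
  classical
  rw [← sum_support_decompose g x]
  refine Submodule.sum_mem _ fun j _ => ?_
  by_cases hj : j ∈ S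
  · exact le_biSup g hj (decompose g x j).2
  · simp [hx j hj]

variable [AddCommGroup ι]

theorem decompose_apply_of_mapsTo {T : V →ₗ[R] V} {d : ι}
    (hT : ∀ i, ∀ x ∈ g i, T x ∈ g (i + d)) (x : V) (j : ι) :
    (decompose g (T x) (j + d) : V) = T (decompose g x j) := by
  induction x using Decomposition.inductionOn g with
  | zero => simp
  | @homogeneous i x =>
    obtain ⟨x, hx⟩ := x
    by_cases hij : i = j
    · subst hij
      rw [decompose_of_mem_same g hx, decompose_of_mem_same g (hT _ x hx)]
    · rw [decompose_of_mem_ne g hx hij, decompose_of_mem_ne g (hT _ x hx) (by simpa using hij),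
        map_zero]
  | add x y hx hy => simp [hx, hy]

theorem ker_le_biSup_of_injOn {T : V →ₗ[R] V} {d : ι} (hT : ∀ i, ∀ x ∈ g i, T x ∈ g (i + d))
    {S : Set ι} (hinj : ∀ j ∉ S, ∀ x ∈ g j, T x = 0 → x = 0) :
    LinearMap.ker T ≤ ⨆ i ∈ S, g i := fun x hx =>
  mem_biSup_of_decompose_eq_zero g fun j hj =>
    hinj j hj _ (decompose g x j).2 <| by
      rw [← decompose_apply_of_mapsTo g hT, LinearMap.mem_ker.mp hx, decompose_zero]; rfl

theorem apply_decompose_eq_of_orthogonal {B : V →ₗ[R] V →ₗ[R] R}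
    (hB : ∀ i j, i + j ≠ 0 → ∀ x ∈ g i, ∀ y ∈ g j, B x y = 0) {j : ι} {w : V} (hw : w ∈ g (-j))
    (y : V) : B (decompose g y j) w = B y w := by
  induction y using Decomposition.inductionOn g with
  | zero => simp
  | @homogeneous i y =>
    obtain ⟨y, hy⟩ := y
    by_cases hij : i = j
    · subst hij
      rw [decompose_of_mem_same g hy]
    · rw [decompose_of_mem_ne g hy hij, hB _ _ (by rwa [← sub_eq_add_neg, sub_ne_zero]) y hy w hw,
        map_zero, LinearMap.zero_apply]
  | add x y hx hy =>
    rw [decompose_add, add_apply, Submodule.coe_add, map_add, LinearMap.add_apply, hx, hy,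
      map_add, LinearMap.add_apply]

theorem eq_zero_of_orthogonal_of_mem {B : V →ₗ[R] V →ₗ[R] R}
    (hB : ∀ i j, i + j ≠ 0 → ∀ x ∈ g i, ∀ y ∈ g j, B x y = 0)
    (hnd : ∀ x, (∀ y, B x y = 0) → x = 0) {j : ι} {x : V} (hx : x ∈ g j)
    (hperp : ∀ y ∈ g (-j), B x y = 0) : x = 0 := by
  refine hnd x fun y => ?_
  have hB' : ∀ i j, i + j ≠ 0 → ∀ x ∈ g i, ∀ y ∈ g j, B.flip x y = 0 :=
    fun i j hij x hx y hy => hB j i (by rwa [add_comm]) y hy x hx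
  have := apply_decompose_eq_of_orthogonal g hB' (j := -j) (by rwa [neg_neg]) y
  rw [LinearMap.flip_apply, LinearMap.flip_apply] at this
  rw [← this, hperp _ (decompose g y (-j)).2]

end

theorem finite_setOf_ne_bot {ι K V : Type*} [DecidableEq ι] [Field K] [AddCommGroup V]
    [Module K V] [FiniteDimensional K V] (g : ι → Submodule K V) [Decomposition g] :
    {i | g i ≠ ⊥}.Finite :=
  Set.finite_coe_iff.mp <| @Finite.of_fintype _
    (Decomposition.isInternal g).submodule_iSupIndep.fintypeNeBotOfFiniteDimensional

theorem mem_of_apply_eq_smul {K V : Type*} [Field K] [CharZero K] [AddCommGroup V] [Module K V]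
    {g : ℤ → Submodule K V} [Decomposition g] {T : V →ₗ[K] V}
    (hT : ∀ i, ∀ x ∈ g i, T x = (i : K) • x) {c : ℤ} {y : V}
    (hy : T y = (c : K) • y) : y ∈ g c := by
  have hT' : ∀ i, ∀ x ∈ g i, T x ∈ g (i + 0) := fun i x hx => by
    rw [add_zero, hT i x hx]; exact (g i).smul_mem _ hx
  have hcomp : ∀ j : ℤ, ((j : K) - c) • (decompose g y j : V) = 0 := fun j => by
    have := decompose_apply_of_mapsTo g hT' y j
    rw [add_zero, hT j _ (decompose g y j).2, hy, decompose_smul, smul_apply,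
      Submodule.coe_smul] at this
    rw [sub_smul, ← this, sub_self]
  simpa using mem_biSup_of_decompose_eq_zero g (S := {c}) fun j hj =>
    (smul_eq_zero.mp (hcomp j)).resolve_left (by
      rw [sub_eq_zero, Int.cast_inj]; exact hj)

end DirectSum

theorem apply_eq_zero_of_add_ne_zero {K V : Type*} [Field K] [CharZero K] [AddCommGroup V]
    [Module K V] {g : ℤ → Submodule K V} {T : V →ₗ[K] V}
    (hT : ∀ i, ∀ x ∈ g i, T x = (i : K) • x) {B : V →ₗ[K] V →ₗ[K] K}
    (hB : ∀ x y, B (T x) y = -B x (T y)) :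
    ∀ i j : ℤ, i + j ≠ 0 → ∀ x ∈ g i, ∀ y ∈ g j, B x y = 0 := by
  intro i j hij x hx y hy
  have h := hB x y
  rw [hT i x hx, hT j y hy, map_smul, map_smul, LinearMap.smul_apply, smul_eq_mul,
    smul_eq_mul, ← sub_eq_zero, sub_neg_eq_add, ← add_mul] at h
  exact (mul_eq_zero.mp h).resolve_left (by exact_mod_cast hij)

/-- The adjoint action of `e` and `f` for an `sl₂`-triple `(e, h, f)`, on the grading by the
eigenvalues of `ad h`. -/
structure IsGradedSl2 {K V : Type*} [Field K] [AddCommGroup V] [Module K V]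
    (g : ℤ → Submodule K V) (E F : Module.End K V) : Prop where
  raise : ∀ i, ∀ x ∈ g i, E x ∈ g (i + 2)
  lower : ∀ i, ∀ x ∈ g i, F x ∈ g (i - 2)
  comm : ∀ i, ∀ x ∈ g i, E (F x) = F (E x) + (i : K) • x

namespace IsGradedSl2

variable {K V : Type*} [Field K] [AddCommGroup V] [Module K V] {g : ℤ → Submodule K V}
  {E F : Module.End K V}

theorem swap (hs : IsGradedSl2 g E F) : IsGradedSl2 (fun i => g (-i)) F E where
  raise i x hx := by
    have h := hs.lower (-i) x hx
    rwa [show -i - 2 = -(i + 2) by ring] at h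
  lower i x hx := by
    have h := hs.raise (-i) x hx
    rwa [show -i + 2 = -(i - 2) by ring] at h
  comm i x hx := by
    rw [hs.comm (-i) x hx, Int.cast_neg, neg_smul, neg_add_cancel_right]

theorem pow_lower_mem (hs : IsGradedSl2 g E F) (k : ℕ) {i : ℤ} {x : V} (hx : x ∈ g i) :
    (F ^ k) x ∈ g (i - 2 * k) := by
  induction k with
  | zero => simpa using hx
  | succ k ih =>
    rw [pow_succ', Module.End.mul_apply]
    convert hs.lower _ _ ih using 2
    push_cast; ring

theorem pow_raise_mem (hs : IsGradedSl2 g E F) (k : ℕ) {i : ℤ} {x : V} (hx : x ∈ g i) :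
    (E ^ k) x ∈ g (i + 2 * k) := by
  have h := hs.swap.pow_lower_mem k (i := -i) (by simpa)
  rwa [show -i - 2 * (k : ℤ) = -(i + 2 * k) by ring, neg_neg] at h

theorem raise_lower_pow_succ (hs : IsGradedSl2 g E F) {j : ℤ} {u : V} (hu : u ∈ g j)
    (hFE : F (E u) = 0) (k : ℕ) :
    E ((F ^ (k + 1)) u) = (((k : K) + 1) * ((j : K) - k)) • (F ^ k) u := by
  induction k with
  | zero => simp [hs.comm j u hu, hFE]
  | succ k ih =>
    rw [pow_succ' F (k + 1), Module.End.mul_apply, hs.comm _ _ (hs.pow_lower_mem (k + 1) hu), ih,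
      map_smul, ← Module.End.mul_apply, ← pow_succ', ← add_smul]
    congr 1
    push_cast; ring

theorem raise_pow_lower_pow (hs : IsGradedSl2 g E F) {j : ℤ} {u : V} (hu : u ∈ g j)
    (hFE : F (E u) = 0) (n : ℕ) :
    (E ^ n) ((F ^ n) u) = (∏ k ∈ Finset.range n, ((k : K) + 1) * ((j : K) - k)) • u := by
  induction n with
  | zero => simp
  | succ n ih =>
    rw [pow_succ E n, Module.End.mul_apply, hs.raise_lower_pow_succ hu hFE, map_smul, ih,
      smul_smul, Finset.prod_range_succ, mul_comm]

theorem exists_pow_lower_eq_zero (hs : IsGradedSl2 g E F) (hfin : {i | g i ≠ ⊥}.Finite)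
    {i : ℤ} {x : V} (hx : x ∈ g i) : ∃ N : ℕ, (F ^ N) x = 0 := by
  obtain ⟨lb, hlb⟩ := hfin.bddBelow
  refine ⟨(i - lb).toNat + 1, ?_⟩
  have hbot : g (i - 2 * ((i - lb).toNat + 1 : ℕ)) = ⊥ := by
    by_contra hne
    have := hlb hne
    omega
  have h := hs.pow_lower_mem ((i - lb).toNat + 1) hx
  rwa [hbot, Submodule.mem_bot] at h

variable [CharZero K]

theorem eq_zero_of_lower_raise_eq_zero (hs : IsGradedSl2 g E F) (hfin : {i | g i ≠ ⊥}.Finite)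
    {j : ℤ} (hj : j ≤ -1) {u : V} (hu : u ∈ g j) (hFE : F (E u) = 0) : u = 0 := by
  obtain ⟨N, hN⟩ := hs.exists_pow_lower_eq_zero hfin hu
  have h := hs.raise_pow_lower_pow hu hFE N
  rw [hN, map_zero, eq_comm, smul_eq_zero] at h
  refine h.resolve_left (Finset.prod_ne_zero_iff.mpr fun k _ => mul_ne_zero ?_ ?_)
  · exact_mod_cast k.succ_ne_zero
  · rw [sub_ne_zero]; exact_mod_cast (by omega : j ≠ k)

theorem eq_zero_of_lower_eq_zero (hs : IsGradedSl2 g E F) (hfin : {i | g i ≠ ⊥}.Finite)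
    {j : ℤ} (hj : 1 ≤ j) {u : V} (hu : u ∈ g j) (hF : F u = 0) : u = 0 :=
  hs.swap.eq_zero_of_lower_raise_eq_zero (hfin.preimage neg_injective.injOn) (j := -j)
    (by omega) (by simpa using hu) (by rw [hF, map_zero])

theorem mem_map_raise_sup_ker_lower (hs : IsGradedSl2 g E F) (hfin : {i | g i ≠ ⊥}.Finite)
    {i : ℤ} (hi : i ≤ 1) {x : V} (hx : x ∈ g i) :
    x ∈ (g (i - 2)).map E ⊔ LinearMap.ker F := by
  obtain ⟨N, hN⟩ := hs.exists_pow_lower_eq_zero hfin hx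
  induction N generalizing x with
  | zero => simp [show x = 0 by simpa using hN]
  | succ N ih =>
    set y := (F ^ N) x
    have hy : y ∈ g (i - 2 * N) := hs.pow_lower_mem N hx
    have hFy : F y = 0 := by rwa [pow_succ', Module.End.mul_apply] at hN
    have hEy : (E ^ N) y ∈ g i := by simpa using hs.pow_raise_mem N hy
    -- `F^N` maps `E^N y` back to a nonzero multiple `d • y` of `y = F^N x`.
    have hFEy := hs.swap.raise_pow_lower_pow (j := 2 * N - i) (u := y) (by simpa using hy)
      (by rw [hFy, map_zero]) N
    set d := ∏ k ∈ Finset.range N, ((k : K) + 1) * (((2 * N - i : ℤ) : K) - k)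
    have hd : d ≠ 0 := Finset.prod_ne_zero_iff.mpr fun k hk => mul_ne_zero
      (by exact_mod_cast k.succ_ne_zero)
      (by rw [sub_ne_zero]; exact_mod_cast (by simp at hk; omega : 2 * (N : ℤ) - i ≠ k))
    have hrest : x - d⁻¹ • (E ^ N) y ∈ (g (i - 2)).map E ⊔ LinearMap.ker F :=
      ih (sub_mem hx (Submodule.smul_mem _ _ hEy)) <| by
        rw [map_sub, map_smul, hFEy, smul_smul, inv_mul_cancel₀ hd, one_smul, sub_self]
    have hEy' : (E ^ N) y ∈ (g (i - 2)).map E ⊔ LinearMap.ker F := by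
      cases N with
      | zero => exact Submodule.mem_sup_right (by simpa using hFy)
      | succ N =>
        refine Submodule.mem_sup_left ⟨(E ^ N) y, ?_, by rw [pow_succ']; rfl⟩
        have h := hs.pow_raise_mem N hy
        rwa [show i - 2 * ((N + 1 : ℕ) : ℤ) + 2 * N = i - 2 by push_cast; ring] at h
    simpa using add_mem hrest (Submodule.smul_mem _ d⁻¹ hEy')

theorem map_raise_neg_one_eq (hs : IsGradedSl2 g E F) (hfin : {i | g i ≠ ⊥}.Finite) :
    (g (-1)).map E = g 1 := by
  refine le_antisymm (Submodule.map_le_iff_le_comap.mpr fun x hx => hs.raise _ x hx) fun x hx => ?_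
  obtain ⟨y, hy, z, hz, rfl⟩ :=
    Submodule.mem_sup.mp (hs.mem_map_raise_sup_ker_lower hfin le_rfl hx)
  have hy1 : y ∈ g 1 := Submodule.map_le_iff_le_comap.mpr (fun x hx => hs.raise _ x hx) hy
  have hz0 : z = 0 := hs.eq_zero_of_lower_eq_zero hfin le_rfl
    (by simpa using sub_mem hx hy1) hz
  simpa [hz0] using hy

variable [DirectSum.Decomposition g]

theorem ker_lower_le (hs : IsGradedSl2 g E F) (hfin : {i | g i ≠ ⊥}.Finite) :
    LinearMap.ker F ≤ ⨆ i ∈ Set.Iic 0, g i :=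
  DirectSum.ker_le_biSup_of_injOn g (d := -2)
    (fun i x hx => by simpa [sub_eq_add_neg] using hs.lower i x hx)
    fun _ hj _ hx hFx => hs.eq_zero_of_lower_eq_zero hfin (by simp at hj; omega) hx hFx

theorem disjoint_map_raise_ker_lower (hs : IsGradedSl2 g E F) (hfin : {i | g i ≠ ⊥}.Finite)
    {N : Submodule K V} (hN : N ≤ ⨆ i ∈ Set.Iic (-1), g i) :
    Disjoint (N.map E) (LinearMap.ker F) := by
  rw [Submodule.disjoint_def]
  rintro _ ⟨u, hu, rfl⟩ hFEu
  have hu' : u ∈ ⨆ i ∈ Set.Ici 0, g i :=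
    DirectSum.ker_le_biSup_of_injOn g (T := F * E) (d := 0)
      (fun i x hx => by simpa using hs.lower _ _ (hs.raise i x hx))
      (fun _ hj _ hx h => hs.eq_zero_of_lower_raise_eq_zero hfin (by simp at hj; omega) hx h) hFEu
  have hdisj := (DirectSum.Decomposition.isInternal g).submodule_iSupIndep.disjoint_biSup_biSup
    (Set.Iic_disjoint_Ici.mpr (by norm_num : ¬ (0 : ℤ) ≤ -1))
  rw [Submodule.disjoint_def.mp hdisj u (hN hu) hu', map_zero]

theorem eq_zero_of_forall_apply_raise_eq_zero (hs : IsGradedSl2 g E F)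
    (hfin : {i | g i ≠ ⊥}.Finite) {B : V →ₗ[K] V →ₗ[K] K}
    (hB : ∀ i j, i + j ≠ 0 → ∀ x ∈ g i, ∀ y ∈ g j, B x y = 0)
    (hnd : ∀ x, (∀ y, B x y = 0) → x = 0) {a : V} (ha : a ∈ g (-1))
    (h : ∀ y ∈ g (-1), B (E a) y = 0) : a = 0 :=
  hs.eq_zero_of_lower_raise_eq_zero hfin le_rfl ha <| by
    rw [DirectSum.eq_zero_of_orthogonal_of_mem g hB hnd (j := 1) (by simpa using hs.raise _ a ha) h,
      map_zero]

theorem map_biSup_sup_ker_lower_eq (hs : IsGradedSl2 g E F) (hfin : {i | g i ≠ ⊥}.Finite) :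
    (⨆ i ∈ Set.Iic (-2), g i).map E ⊔ LinearMap.ker F = ⨆ i ∈ Set.Iic 0, g i := by
  refine le_antisymm (sup_le ?_ (hs.ker_lower_le hfin)) (iSup₂_le fun i hi x hx => ?_)
  · refine Submodule.map_le_iff_le_comap.mpr (iSup₂_le fun i hi x hx => ?_)
    exact le_biSup g (Set.mem_Iic.mpr (by simp at hi; omega)) (hs.raise i x hx)
  · have hi : i ≤ 0 := hi
    have hle : (g (i - 2)).map E ≤ (⨆ i ∈ Set.Iic (-2), g i).map E :=
      Submodule.map_mono (le_biSup g (Set.mem_Iic.mpr (by omega)))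
    exact sup_le_sup_right hle _ (hs.mem_map_raise_sup_ker_lower hfin (by omega) hx)

theorem map_sup_ker_lower_eq (hs : IsGradedSl2 g E F) (hfin : {i | g i ≠ ⊥}.Finite)
    (Q : Submodule K V) :
    ((⨆ i ∈ Set.Iic (-2), g i) ⊔ (g (-1) ⊓ Q.comap E)).map E ⊔ LinearMap.ker F =
      (⨆ i ∈ Set.Iic 0, g i) ⊔ (g 1 ⊓ Q) := by
  rw [Submodule.map_sup, ← Submodule.map_inf_eq_map_inf_comap, hs.map_raise_neg_one_eq hfin,
    sup_right_comm, hs.map_biSup_sup_ker_lower_eq hfin]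

end IsGradedSl2

section Perp

variable {L : Type*} [AddCommGroup L] [Module ℂ L]

theorem mem_perpSubmodule {B : L →ₗ[ℂ] L →ₗ[ℂ] ℂ} {m : Submodule ℂ L} {x : L} :
    x ∈ perpSubmodule B m ↔ ∀ y ∈ m, B x y = 0 :=
  Iff.rfl

theorem mem_perpSubmodule_iff_le_ker {B : L →ₗ[ℂ] L →ₗ[ℂ] ℂ} {m : Submodule ℂ L} {x : L} :
    x ∈ perpSubmodule B m ↔ m ≤ LinearMap.ker (B x) :=
  Iff.rfl

theorem perpSubmodule_biSup_sup_eq {g : ℤ → Submodule ℂ L} [DirectSum.Decomposition g]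
    {B : L →ₗ[ℂ] L →ₗ[ℂ] ℂ} (hB : ∀ i j, i + j ≠ 0 → ∀ x ∈ g i, ∀ y ∈ g j, B x y = 0)
    (hnd : ∀ x, (∀ y, B x y = 0) → x = 0) {Λ : Submodule ℂ L} (hΛ : Λ ≤ g (-1)) :
    perpSubmodule B ((⨆ i ∈ Set.Iic (-2), g i) ⊔ Λ) =
      (⨆ i ∈ Set.Iic 0, g i) ⊔ (g 1 ⊓ perpSubmodule B Λ) := by
  classical
  refine le_antisymm (fun y hy => ?_) (sup_le (iSup₂_le fun i hi x hx => ?_) ?_)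
  · have hcomp : ∀ j, ∀ w ∈ g (-j), B (DirectSum.decompose g y j) w = B y w :=
      fun j w hw => DirectSum.apply_decompose_eq_of_orthogonal g hB hw y
    rw [← DirectSum.sum_support_decompose g y]
    refine Submodule.sum_mem _ fun j _ => ?_
    have hyj := (DirectSum.decompose g y j).2
    rcases lt_trichotomy j 1 with hj | rfl | hj
    · exact Submodule.mem_sup_left (le_biSup g (Set.mem_Iic.mpr (by omega)) hyj)
    · exact Submodule.mem_sup_right
        ⟨hyj, fun w hw => (hcomp 1 w (hΛ hw)).trans (hy w (Submodule.mem_sup_right hw))⟩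
    · rw [DirectSum.eq_zero_of_orthogonal_of_mem g hB hnd hyj fun w hw => (hcomp j w hw).trans
        (hy w (Submodule.mem_sup_left (le_biSup g (Set.mem_Iic.mpr (by omega)) hw)))]
      exact zero_mem _
  · have hi : i ≤ 0 := hi
    refine mem_perpSubmodule_iff_le_ker.mpr (sup_le (iSup₂_le fun j hj w hw => ?_) fun w hw => ?_)
    · exact hB i j (by simp at hj; omega) x hx w hw
    · exact hB i (-1) (by omega) x hx w (hΛ hw)
  · rintro x ⟨hx, hxΛ⟩
    refine mem_perpSubmodule_iff_le_ker.mpr (sup_le (iSup₂_le fun j hj w hw => ?_) hxΛ)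
    exact hB 1 j (by simp at hj; omega) x hx w hw

end Perp

namespace LinearMap.BilinForm

variable {K W : Type*} [Field K] [AddCommGroup W] [Module K W] {β : LinearMap.BilinForm K W}
  {Λ : Submodule K W}

theorem mem_sup_span_of_mem_orthogonal [IsAlgClosed K] (hβ : β.IsSymm)
    (hmax : ∀ w ∈ β.orthogonal Λ, β w w = 0 → w ∈ Λ) {v z : W} (hv : v ∈ β.orthogonal Λ)
    (hvv : β v v ≠ 0) (hz : z ∈ β.orthogonal Λ) : z ∈ Λ ⊔ K ∙ v := by
  set w := z - (β v z / β v v) • v with hw_def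
  have hw : w ∈ β.orthogonal Λ := sub_mem hz (Submodule.smul_mem _ _ hv)
  have hvw : β v w = 0 := by
    rw [hw_def, map_sub, map_smul, smul_eq_mul, div_mul_cancel₀ _ hvv, sub_self]
  have hwv : β w v = 0 := by rw [hβ.eq, hvw]
  -- `w + s • v` is isotropic for `s² = -β w w / β v v`, so it lies in `Λ`, forcing `s = 0`.
  obtain ⟨s, hs⟩ := IsAlgClosed.exists_pow_nat_eq (-β w w / β v v) two_pos
  have hu : w + s • v ∈ Λ := by
    refine hmax _ (add_mem hw (Submodule.smul_mem _ _ hv)) ?_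
    simp only [map_add, map_smul, LinearMap.add_apply, LinearMap.smul_apply, smul_eq_mul, hvw,
      hwv]
    linear_combination (β v v) * hs + (div_mul_cancel₀ (-β w w) hvv)
  have hs0 : s = 0 := by
    have h := hv _ hu
    rw [map_add, map_smul, LinearMap.add_apply, LinearMap.smul_apply, hwv, smul_eq_mul,
      zero_add] at h
    exact (mul_eq_zero.mp h).resolve_right hvv
  have hww : β w w = 0 := by
    rw [hs0, zero_pow two_ne_zero, eq_comm, div_eq_zero_iff, neg_eq_zero] at hs
    exact hs.resolve_right hvv
  have hz_eq : z = w + (β v z / β v v) • v := by rw [hw_def, sub_add_cancel]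
  rw [hz_eq]
  exact add_mem (Submodule.mem_sup_left (hmax w hw hww))
    (Submodule.mem_sup_right (Submodule.smul_mem _ _ (Submodule.mem_span_singleton_self v)))

theorem orthogonal_le_of_even_finrank [IsAlgClosed K] [FiniteDimensional K W] (hβ : β.IsSymm)
    (hnd : β.Nondegenerate) (hiso : Λ ≤ β.orthogonal Λ)
    (hmax : ∀ w ∈ β.orthogonal Λ, β w w = 0 → w ∈ Λ) (heven : Even (Module.finrank K W)) :
    β.orthogonal Λ ≤ Λ := by
  intro z hz
  refine hmax z hz (by_contra fun hzz => ?_)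
  -- Otherwise `Λ^⊥ = Λ ⊕ K z`, and `dim Λ + dim Λ^⊥ = dim W` would be odd.
  have hperp : β.orthogonal Λ = Λ ⊔ K ∙ z :=
    le_antisymm (fun y hy => mem_sup_span_of_mem_orthogonal hβ hmax hz hzz hy)
      (sup_le hiso ((Submodule.span_singleton_le_iff_mem _ _).mpr hz))
  have hdisj : Disjoint Λ (K ∙ z) :=
    Submodule.disjoint_span_singleton.mpr fun hzΛ => absurd (hiso hzΛ z hzΛ) hzz
  have hdim := finrank_orthogonal hnd Λ
  have hsum := Submodule.finrank_sup_add_finrank_inf_eq Λ (K ∙ z)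
  rw [hdisj.eq_bot, finrank_bot, add_zero, finrank_span_singleton
    (ne_zero_of_not_isOrtho_self z hzz), ← hperp, hdim] at hsum
  have := Submodule.finrank_le Λ
  obtain ⟨r, hr⟩ := heven
  omega

end LinearMap.BilinForm

section SuperIsotropic

variable {L : Type*} [AddCommGroup L] [Module ℂ L]

structure IsEvenSuperSkew (P : Bool → Submodule ℂ L) (ω : L →ₗ[ℂ] L →ₗ[ℂ] ℂ) : Prop where
  mixed : ∀ p q, p ≠ q → ∀ a ∈ P p, ∀ b ∈ P q, ω a b = 0
  even : ∀ a ∈ P false, ∀ b ∈ P false, ω a b = -ω b a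
  odd : ∀ a ∈ P true, ∀ b ∈ P true, ω a b = ω b a

structure IsMaxGradedIsotropic (P : Bool → Submodule ℂ L) (ω : L →ₗ[ℂ] L →ₗ[ℂ] ℂ)
    (W Λ : Submodule ℂ L) : Prop where
  le : Λ ≤ W
  graded : Λ = (Λ ⊓ P false) ⊔ (Λ ⊓ P true)
  isotropic : ∀ x ∈ Λ, ∀ y ∈ Λ, ω x y = 0
  maximal : ∀ U : Submodule ℂ L, Λ ≤ U → U ≤ W → U = (U ⊓ P false) ⊔ (U ⊓ P true) →
    (∀ x ∈ U, ∀ y ∈ U, ω x y = 0) → U = Λ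

variable {P : Bool → Submodule ℂ L} {ω : L →ₗ[ℂ] L →ₗ[ℂ] ℂ} {W Λ : Submodule ℂ L}

namespace IsEvenSuperSkew

theorem apply_self_eq_zero (hω : IsEvenSuperSkew P ω) {a : L} (ha : a ∈ P false) : ω a a = 0 := by
  linear_combination hω.even a ha a ha / 2

theorem apply_eq_zero_of_graded (hω : IsEvenSuperSkew P ω)
    (hΛ : Λ = (Λ ⊓ P false) ⊔ (Λ ⊓ P true)) {x₀ x₁ : L} (hx₀ : x₀ ∈ P false) (hx₁ : x₁ ∈ P true)
    (h : ∀ y ∈ Λ, ω (x₀ + x₁) y = 0) :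
    (∀ y ∈ Λ, ω x₀ y = 0) ∧ ∀ y ∈ Λ, ω x₁ y = 0 := by
  have hsplit : ∀ y ∈ Λ, ω x₀ y = 0 ∧ ω x₁ y = 0 := by
    intro y hy
    rw [hΛ] at hy
    obtain ⟨y₀, hy₀, y₁, hy₁, rfl⟩ := Submodule.mem_sup.mp hy
    have h₀₁ := hω.mixed false true (by decide) _ hx₀ _ hy₁.2
    have h₁₀ := hω.mixed true false (by decide) _ hx₁ _ hy₀.2
    have h₀ := h y₀ (hΛ ▸ Submodule.mem_sup_left hy₀ : y₀ ∈ Λ)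
    have h₁ := h y₁ (hΛ ▸ Submodule.mem_sup_right hy₁ : y₁ ∈ Λ)
    simp only [map_add, LinearMap.add_apply] at h₀ h₁ ⊢
    exact ⟨by linear_combination h₀ - h₁₀ + h₀₁, by linear_combination h₁ - h₀₁ + h₁₀⟩
  exact ⟨fun y hy => (hsplit y hy).1, fun y hy => (hsplit y hy).2⟩

theorem apply_eq_zero_swap (hω : IsEvenSuperSkew P ω) (hΛ : Λ = (Λ ⊓ P false) ⊔ (Λ ⊓ P true))
    {p : Bool} {w : L} (hw : w ∈ P p) (hwΛ : ∀ y ∈ Λ, ω w y = 0) : ∀ y ∈ Λ, ω y w = 0 := by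
  intro y hy
  have hy' := hy
  rw [hΛ] at hy'
  obtain ⟨y₀, hy₀, y₁, hy₁, rfl⟩ := Submodule.mem_sup.mp hy'
  rw [map_add, LinearMap.add_apply]
  cases p
  · rw [hω.even _ hy₀.2 _ hw, hwΛ _ hy₀.1, hω.mixed true false (by decide) _ hy₁.2 _ hw]
    simp
  · rw [hω.mixed false true (by decide) _ hy₀.2 _ hw, hω.odd _ hy₁.2 _ hw, hwΛ _ hy₁.1]
    simp

theorem apply_eq_zero_of_forall_odd (hω : IsEvenSuperSkew P ω)
    (hW : W = (W ⊓ P false) ⊔ (W ⊓ P true)) {a : L} (ha : a ∈ P true)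
    (h : ∀ b ∈ W ⊓ P true, ω a b = 0) : ∀ y ∈ W, ω a y = 0 := by
  intro y hy
  rw [hW] at hy
  obtain ⟨y₀, hy₀, y₁, hy₁, rfl⟩ := Submodule.mem_sup.mp hy
  rw [map_add, hω.mixed true false (by decide) _ ha _ hy₀.2, h _ hy₁, add_zero]

theorem isSymm_restrict_odd (hω : IsEvenSuperSkew P ω) (W : Submodule ℂ L) :
    (LinearMap.BilinForm.restrict ω (W ⊓ P true)).IsSymm :=
  ⟨fun a b => hω.odd _ a.2.2 _ b.2.2⟩

end IsEvenSuperSkew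

namespace IsMaxGradedIsotropic

theorem mem_of_homogeneous (hΛ : IsMaxGradedIsotropic P ω W Λ) {p : Bool} {w : L}
    (hwW : w ∈ W) (hwP : w ∈ P p) (hwΛ : ∀ y ∈ Λ, ω w y = 0) (hΛw : ∀ y ∈ Λ, ω y w = 0)
    (hww : ω w w = 0) : w ∈ Λ := by
  have hU : Λ ⊔ ℂ ∙ w = Λ := by
    refine hΛ.maximal _ le_sup_left
      (sup_le hΛ.le ((Submodule.span_singleton_le_iff_mem _ _).mpr hwW)) ?_ ?_
    · refine le_antisymm (sup_le ?_ ?_) (sup_le inf_le_left inf_le_left)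
      · exact hΛ.graded.le.trans
          (sup_le_sup (inf_le_inf_right _ le_sup_left) (inf_le_inf_right _ le_sup_left))
      · have hw : ℂ ∙ w ≤ (Λ ⊔ ℂ ∙ w) ⊓ P p :=
          (Submodule.span_singleton_le_iff_mem _ _).mpr ⟨Submodule.mem_sup_right
            (Submodule.mem_span_singleton_self w), hwP⟩
        cases p
        · exact hw.trans le_sup_left
        · exact hw.trans le_sup_right
    · intro x hx y hy
      obtain ⟨a, ha, _, hs, rfl⟩ := Submodule.mem_sup.mp hx
      obtain ⟨b, hb, _, ht, rfl⟩ := Submodule.mem_sup.mp hy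
      obtain ⟨s, rfl⟩ := Submodule.mem_span_singleton.mp hs
      obtain ⟨t, rfl⟩ := Submodule.mem_span_singleton.mp ht
      simp [hΛ.isotropic a ha b hb, hwΛ b hb, hΛw a ha, hww]
  exact hU ▸ Submodule.mem_sup_right (Submodule.mem_span_singleton_self w)

theorem mem_of_even (hΛ : IsMaxGradedIsotropic P ω W Λ) (hω : IsEvenSuperSkew P ω) {w : L}
    (hwW : w ∈ W) (hwP : w ∈ P false) (hwΛ : ∀ y ∈ Λ, ω w y = 0) : w ∈ Λ :=
  hΛ.mem_of_homogeneous hwW hwP hwΛ (hω.apply_eq_zero_swap hΛ.graded hwP hwΛ)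
    (hω.apply_self_eq_zero hwP)

theorem mem_of_odd (hΛ : IsMaxGradedIsotropic P ω W Λ) (hω : IsEvenSuperSkew P ω) {w : L}
    (hwW : w ∈ W) (hwP : w ∈ P true) (hwΛ : ∀ y ∈ Λ, ω w y = 0) (hww : ω w w = 0) : w ∈ Λ :=
  hΛ.mem_of_homogeneous hwW hwP hwΛ (hω.apply_eq_zero_swap hΛ.graded hwP hwΛ) hww

theorem exists_odd_sub_mem (hΛ : IsMaxGradedIsotropic P ω W Λ) (hω : IsEvenSuperSkew P ω)
    (hW : W = (W ⊓ P false) ⊔ (W ⊓ P true)) {x : L} (hx : x ∈ W ⊓ perpSubmodule ω Λ) :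
    ∃ x₁ ∈ W ⊓ P true, (∀ y ∈ Λ, ω x₁ y = 0) ∧ x - x₁ ∈ Λ := by
  have hxW := hx.1
  rw [hW] at hxW
  obtain ⟨x₀, hx₀, x₁, hx₁, hsum⟩ := Submodule.mem_sup.mp hxW
  obtain ⟨hx₀Λ, hx₁Λ⟩ := hω.apply_eq_zero_of_graded hΛ.graded hx₀.2 hx₁.2 (hsum ▸ hx.2)
  refine ⟨x₁, hx₁, hx₁Λ, ?_⟩
  rw [← hsum, add_sub_cancel_right]
  exact hΛ.mem_of_even hω hx₀.1 hx₀.2 hx₀Λ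

theorem le_inf_perpSubmodule (hΛ : IsMaxGradedIsotropic P ω W Λ) : Λ ≤ W ⊓ perpSubmodule ω Λ :=
  le_inf hΛ.le hΛ.isotropic

theorem mem_orthogonal_restrict_odd_iff (hΛ : IsMaxGradedIsotropic P ω W Λ)
    (hω : IsEvenSuperSkew P ω) {a : ↥(W ⊓ P true)} :
    a ∈ (LinearMap.BilinForm.restrict ω (W ⊓ P true)).orthogonal (Λ.comap (W ⊓ P true).subtype) ↔
      ∀ y ∈ Λ, ω a y = 0 := by
  refine ⟨fun ha y hy => ?_, fun ha n hn => hω.apply_eq_zero_swap hΛ.graded a.2.2 ha n hn⟩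
  have hy' := hy
  rw [hΛ.graded] at hy'
  obtain ⟨y₀, hy₀, y₁, hy₁, rfl⟩ := Submodule.mem_sup.mp hy'
  rw [map_add, hω.mixed true false (by decide) _ a.2.2 _ hy₀.2, zero_add, hω.odd _ a.2.2 _ hy₁.2]
  exact ha ⟨y₁, hΛ.le hy₁.1, hy₁.2⟩ hy₁.1

theorem maximal_restrict_odd (hΛ : IsMaxGradedIsotropic P ω W Λ) (hω : IsEvenSuperSkew P ω) :
    ∀ w ∈ (LinearMap.BilinForm.restrict ω (W ⊓ P true)).orthogonal (Λ.comap (W ⊓ P true).subtype),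
      LinearMap.BilinForm.restrict ω (W ⊓ P true) w w = 0 → w ∈ Λ.comap (W ⊓ P true).subtype :=
  fun w hw hww => hΛ.mem_of_odd hω w.2.1 w.2.2 ((hΛ.mem_orthogonal_restrict_odd_iff hω).mp hw) hww

theorem inf_perpSubmodule_eq_sup_span (hΛ : IsMaxGradedIsotropic P ω W Λ)
    (hω : IsEvenSuperSkew P ω) (hW : W = (W ⊓ P false) ⊔ (W ⊓ P true)) {v : L}
    (hv : v ∈ W ⊓ P true) (hvΛ : ∀ y ∈ Λ, ω v y = 0) (hvv : ω v v ≠ 0) :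
    W ⊓ perpSubmodule ω Λ = Λ ⊔ ℂ ∙ v := by
  refine le_antisymm (fun x hx => ?_) (sup_le hΛ.le_inf_perpSubmodule ?_)
  · obtain ⟨x₁, hx₁, hx₁Λ, hsub⟩ := hΛ.exists_odd_sub_mem hω hW hx
    have h := LinearMap.BilinForm.mem_sup_span_of_mem_orthogonal
      (hω.isSymm_restrict_odd W) (hΛ.maximal_restrict_odd hω)
      ((hΛ.mem_orthogonal_restrict_odd_iff hω (a := ⟨v, hv⟩)).mpr hvΛ) hvv
      ((hΛ.mem_orthogonal_restrict_odd_iff hω (a := ⟨x₁, hx₁⟩)).mpr hx₁Λ)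
    replace h := Submodule.mem_map_of_mem (f := (W ⊓ P true).subtype) h
    rw [Submodule.map_sup, Submodule.map_span, Set.image_singleton] at h
    rw [← sub_add_cancel x x₁]
    have hle : (Λ.comap (W ⊓ P true).subtype).map (W ⊓ P true).subtype ≤ Λ :=
      Submodule.map_comap_le _ _
    exact add_mem (Submodule.mem_sup_left hsub) (sup_le_sup_right hle _ h)
  · exact (Submodule.span_singleton_le_iff_mem _ _).mpr ⟨hv.1, hvΛ⟩

theorem inf_perpSubmodule_eq_of_even_finrank [FiniteDimensional ℂ L]
    (hΛ : IsMaxGradedIsotropic P ω W Λ) (hω : IsEvenSuperSkew P ω)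
    (hW : W = (W ⊓ P false) ⊔ (W ⊓ P true))
    (hnd : ∀ a ∈ W, (∀ b ∈ W, ω a b = 0) → a = 0)
    (heven : Even (Module.finrank ℂ ↥(W ⊓ P true))) :
    W ⊓ perpSubmodule ω Λ = Λ := by
  refine le_antisymm (fun x hx => ?_) hΛ.le_inf_perpSubmodule
  obtain ⟨x₁, hx₁, hx₁Λ, hsub⟩ := hΛ.exists_odd_sub_mem hω hW hx
  have hsymm := hω.isSymm_restrict_odd W
  have h := LinearMap.BilinForm.orthogonal_le_of_even_finrank hsymm
    (hsymm.isRefl.nondegenerate_iff_separatingLeft.mpr fun a ha =>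
      Subtype.ext (hnd a a.2.1 (hω.apply_eq_zero_of_forall_odd hW a.2.2 fun b hb => ha ⟨b, hb⟩)))
    (fun a ha b hb => hΛ.isotropic _ hb _ ha) (hΛ.maximal_restrict_odd hω) heven
    ((hΛ.mem_orthogonal_restrict_odd_iff hω (a := ⟨x₁, hx₁⟩)).mpr hx₁Λ)
  rw [← sub_add_cancel x x₁]
  exact add_mem hsub h

end IsMaxGradedIsotropic

end SuperIsotropic

section LieSuperalgebra

variable {L : Type*} [AddCommGroup L] [Module ℂ L] {br : L →ₗ[ℂ] L →ₗ[ℂ] L}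
  {P : Bool → Submodule ℂ L}

theorem bracket_eq_neg_of_mem_even (hPcompl : IsCompl (P false) (P true))
    (hskew : ∀ (p q : Bool), ∀ x ∈ P p, ∀ y ∈ P q,
      br x y = (if p && q then (1 : ℂ) else -1) • br y x)
    {c : L} (hc : c ∈ P false) (x : L) : br x c = -br c x := by
  obtain ⟨a, ha, b, hb, rfl⟩ :=
    Submodule.mem_sup.mp (hPcompl.sup_eq_top ▸ Submodule.mem_top : x ∈ P false ⊔ P true)
  simp only [map_add, LinearMap.add_apply, hskew false false a ha c hc,
    hskew true false b hb c hc, Bool.and_self, Bool.and_false, Bool.false_eq_true, ↓reduceIte,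
    neg_smul, one_smul, neg_add_rev]
  abel

theorem isGradedSl2_ad {g : ℤ → Submodule ℂ L} [DirectSum.Decomposition g] {e h f : L}
    (hgrad : ∀ (i : ℤ), ∀ x ∈ g i, br h x = (i : ℂ) • x)
    (hjac : ∀ (p q : Bool), ∀ x ∈ P p, ∀ y ∈ P q, ∀ z : L,
      br x (br y z) = br (br x y) z + (if p && q then (-1 : ℂ) else 1) • br y (br x z))
    (he0 : e ∈ P false) (hf0 : f ∈ P false) (hh0 : h ∈ P false)
    (hhe : br h e = (2 : ℂ) • e) (hhf : br h f = (-2 : ℂ) • f) (hef : br e f = h) :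
    IsGradedSl2 g (br e) (br f) where
  raise i x hx := DirectSum.mem_of_apply_eq_smul hgrad <| by
    simp [hjac false false h hh0 e he0 x, hhe, hgrad i x hx, add_smul, add_comm]
  lower i x hx := DirectSum.mem_of_apply_eq_smul hgrad <| by
    simp [hjac false false h hh0 f hf0 x, hhf, hgrad i x hx, sub_eq_add_neg, add_smul, add_comm]
  comm i x hx := by simp [hjac false false e he0 f hf0 x, hef, hgrad i x hx, add_comm]

theorem isEvenSuperSkew_compr₂ {B : L →ₗ[ℂ] L →ₗ[ℂ] ℂ}
    (hbrP : ∀ (p q : Bool), ∀ x ∈ P p, ∀ y ∈ P q, br x y ∈ P (xor p q))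
    (hskew : ∀ (p q : Bool), ∀ x ∈ P p, ∀ y ∈ P q,
      br x y = (if p && q then (1 : ℂ) else -1) • br y x)
    (hBeven : ∀ x ∈ P false, ∀ y ∈ P true, B x y = 0) {e : L} (he0 : e ∈ P false) :
    IsEvenSuperSkew P (br.compr₂ (B e)) where
  mixed p q hpq a ha b hb := hBeven e he0 _ <| by
    simpa [Bool.xor_iff_ne.mpr hpq] using hbrP p q a ha b hb
  even a ha b hb := by simp [hskew false false a ha b hb]
  odd a ha b hb := by simp [hskew true true a ha b hb]

theorem comap_perpSubmodule_eq {B : L →ₗ[ℂ] L →ₗ[ℂ] ℂ}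
    (hBinv : ∀ a b c : L, B (br a b) c = B a (br b c)) (e : L) (Λ : Submodule ℂ L) :
    (perpSubmodule B Λ).comap (br e) = perpSubmodule (br.compr₂ (B e)) Λ := by
  ext x
  simp only [Submodule.mem_comap, mem_perpSubmodule, LinearMap.compr₂_apply, hBinv]

end LieSuperalgebra

theorem statement3_general {L : Type*} [AddCommGroup L] [Module ℂ L] [FiniteDimensional ℂ L]
    (br : L →ₗ[ℂ] L →ₗ[ℂ] L)       -- the Lie superbracket
    (B : L →ₗ[ℂ] L →ₗ[ℂ] ℂ)        -- the bilinear form (·,·)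
    (P : Bool → Submodule ℂ L)      -- parity decomposition: P false even, P true odd
    (hPcompl : IsCompl (P false) (P true))
    (hbrP : ∀ (p q : Bool), ∀ x ∈ P p, ∀ y ∈ P q, br x y ∈ P (xor p q))
    (hskew : ∀ (p q : Bool), ∀ x ∈ P p, ∀ y ∈ P q,
      br x y = (if p && q then (1 : ℂ) else -1) • br y x)
    (hjac : ∀ (p q : Bool), ∀ x ∈ P p, ∀ y ∈ P q, ∀ z : L,
      br x (br y z) = br (br x y) z + (if p && q then (-1 : ℂ) else 1) • br y (br x z))
    (g : ℤ → Submodule ℂ L)         -- the Dynkin grading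
    (hinternal : DirectSum.IsInternal fun i : ℤ => g i)
    (hgP : ∀ i : ℤ, g i = (g i ⊓ P false) ⊔ (g i ⊓ P true))
    (e h f : L)
    (hgrad : ∀ (i : ℤ), ∀ x ∈ g i, br h x = (i : ℂ) • x)
    (he0 : e ∈ P false) (hf0 : f ∈ P false)
    (hhe : br h e = (2 : ℂ) • e) (hhf : br h f = (-2 : ℂ) • f) (hef : br e f = h)
    -- the bilinear form is invariant, supersymmetric, even and nondegenerate
    (hBinv : ∀ a b c : L, B (br a b) c = B a (br b c))
    (hBeven : ∀ x ∈ P false, ∀ y ∈ P true, B x y = 0)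
    (hBnondeg : ∀ x : L, (∀ y : L, B x y = 0) → x = 0)
    -- g(-1)' : a maximal graded isotropic subspace of g(-1) for the form ⟨x,y⟩ = (e,[x,y])
    (g1' : Submodule ℂ L) (hg1'le : g1' ≤ g (-1))
    (hg1'graded : g1' = (g1' ⊓ P false) ⊔ (g1' ⊓ P true))
    (hiso : ∀ x ∈ g1', ∀ y ∈ g1', B e (br x y) = 0)
    (hmax : ∀ W : Submodule ℂ L, g1' ≤ W → W ≤ g (-1) →
      W = (W ⊓ P false) ⊔ (W ⊓ P true) →
      (∀ x ∈ W, ∀ y ∈ W, B e (br x y) = 0) → W = g1')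
    -- m = ⊕_{i ≤ -2} g(i) ⊕ g(-1)'
    (m m' : Submodule ℂ L)
    (hm : m = (⨆ i ∈ Set.Iic (-2 : ℤ), g i) ⊔ g1')
    -- m' = m when dim g(-1)₁ is even; m' = m ⊕ ℂv when dim g(-1)₁ is odd, where
    -- v ∈ g(-1)₁ is orthogonal to g(-1)' and satisfies ⟨v,v⟩ = 1
    (hm' : (Even (Module.finrank ℂ ↥(g (-1) ⊓ P true)) ∧ m' = m) ∨
      (¬ Even (Module.finrank ℂ ↥(g (-1) ⊓ P true)) ∧ ∃ v : L,
        v ∈ g (-1) ⊓ P true ∧ (∀ y ∈ g1', B e (br v y) = 0) ∧ B e (br v v) = 1 ∧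
        m' = m ⊔ Submodule.span ℂ {v})) :
    -- conclusion: m^⊥ = [m', e] ⊕ g^f
    perpSubmodule B m =
        Submodule.map (LinearMap.flip br e) m' ⊔ LinearMap.ker (br f) ∧
      Disjoint (Submodule.map (LinearMap.flip br e) m') (LinearMap.ker (br f)) := by
  let _ := hinternal.chooseDecomposition
  have hh0 : h ∈ P false := hef ▸ by simpa using hbrP false false e he0 f hf0
  have hsl2 : IsGradedSl2 g (br e) (br f) := isGradedSl2_ad hgrad hjac he0 hf0 hh0 hhe hhf hef
  have hfin := DirectSum.finite_setOf_ne_bot g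
  have horth := apply_eq_zero_of_add_ne_zero hgrad (B := B) fun x y => by
    rw [← hBinv, bracket_eq_neg_of_mem_even hPcompl hskew hh0, map_neg, LinearMap.neg_apply,
      neg_neg]
  have hω := isEvenSuperSkew_compr₂ hbrP hskew hBeven he0 (B := B)
  have hΛ : IsMaxGradedIsotropic P (br.compr₂ (B e)) (g (-1)) g1' :=
    ⟨hg1'le, hg1'graded, hiso, hmax⟩
  -- `x ∈ (perpSubmodule B g1').comap (br e)` says `⟨x, g(-1)'⟩ = (e, [x, g(-1)']) = 0`.
  have hm'eq : m' = (⨆ i ∈ Set.Iic (-2), g i) ⊔ (g (-1) ⊓ (perpSubmodule B g1').comap (br e)) := by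
    rw [comap_perpSubmodule_eq hBinv]
    rcases hm' with ⟨heven, rfl⟩ | ⟨-, v, hv, hvΛ, hvv, rfl⟩
    · have hnd : ∀ a ∈ g (-1), (∀ b ∈ g (-1), B e (br a b) = 0) → a = 0 :=
        fun a ha hab => hsl2.eq_zero_of_forall_apply_raise_eq_zero hfin horth hBnondeg ha
          fun y hy => (hBinv e a y).trans (hab y hy)
      rw [hm, hΛ.inf_perpSubmodule_eq_of_even_finrank hω (hgP (-1)) hnd heven]
    · rw [hm, hΛ.inf_perpSubmodule_eq_sup_span hω (hgP (-1)) hv hvΛ (by simp [hvv]), sup_assoc]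
  have hflip : br.flip e = -br e :=
    LinearMap.ext fun x => bracket_eq_neg_of_mem_even hPcompl hskew he0 x
  rw [hflip, Submodule.map_neg, hm, perpSubmodule_biSup_sup_eq horth hBnondeg hg1'le, hm'eq,
    hsl2.map_sup_ker_lower_eq hfin]
  refine ⟨rfl, hsl2.disjoint_map_raise_ker_lower hfin (sup_le ?_ ?_)⟩
  · exact iSup₂_le fun i hi =>
      le_biSup g (Set.mem_Iic.mpr ((Set.mem_Iic.mp hi).trans (by norm_num)))
  · exact inf_le_left.trans (le_biSup g (Set.mem_Iic.mpr le_rfl))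

/-- Let `m = ⊕_{i ≤ -2} g(i) ⊕ g(-1)'` and `m' = m` (if `dim g(-1)₁` is
even) or `m' = m ⊕ ℂ·v` (if `dim g(-1)₁` is odd, for the distinguished vector `v`
orthogonal to `g(-1)'` with `⟨v,v⟩ = 1`).  Then the annihilator
`m^⊥ = {y ∈ g : (y, m) = 0}` decomposes as a direct sum `m^⊥ = [m', e] ⊕ g^f`, where
`g^f = ker (ad f)` is the centralizer of `f` in `g`. -/
theorem statement3 {L : Type*} [AddCommGroup L] [Module ℂ L] [FiniteDimensional ℂ L]
    (br : L →ₗ[ℂ] L →ₗ[ℂ] L)       -- the Lie superbracket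
    (B : L →ₗ[ℂ] L →ₗ[ℂ] ℂ)        -- the bilinear form (·,·)
    (P : Bool → Submodule ℂ L)      -- parity decomposition: P false even, P true odd
    (hPcompl : IsCompl (P false) (P true))
    (hbrP : ∀ (p q : Bool), ∀ x ∈ P p, ∀ y ∈ P q, br x y ∈ P (xor p q))
    (hskew : ∀ (p q : Bool), ∀ x ∈ P p, ∀ y ∈ P q,
      br x y = (if p && q then (1 : ℂ) else -1) • br y x)
    (hjac : ∀ (p q : Bool), ∀ x ∈ P p, ∀ y ∈ P q, ∀ z : L,
      br x (br y z) = br (br x y) z + (if p && q then (-1 : ℂ) else 1) • br y (br x z))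
    (g : ℤ → Submodule ℂ L)         -- the Dynkin grading
    (hinternal : DirectSum.IsInternal fun i : ℤ => g i)
    (hgP : ∀ i : ℤ, g i = (g i ⊓ P false) ⊔ (g i ⊓ P true))
    (e h f : L)
    (hgrad : ∀ (i : ℤ), ∀ x ∈ g i, br h x = (i : ℂ) • x)
    (he : e ∈ g 2) (he0 : e ∈ P false) (hf : f ∈ g (-2)) (hf0 : f ∈ P false)
    (hhe : br h e = (2 : ℂ) • e) (hhf : br h f = (-2 : ℂ) • f) (hef : br e f = h)
    -- the bilinear form is invariant, supersymmetric, even and nondegenerate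
    (hBinv : ∀ a b c : L, B (br a b) c = B a (br b c))
    (hBsuper : ∀ (p q : Bool), ∀ x ∈ P p, ∀ y ∈ P q,
      B x y = (if p && q then (-1 : ℂ) else 1) * B y x)
    (hBeven : ∀ x ∈ P false, ∀ y ∈ P true, B x y = 0)
    (hBnondeg : ∀ x : L, (∀ y : L, B x y = 0) → x = 0)
    -- g(-1)' : a maximal graded isotropic subspace of g(-1) for the form ⟨x,y⟩ = (e,[x,y])
    (g1' : Submodule ℂ L) (hg1'le : g1' ≤ g (-1))
    (hg1'graded : g1' = (g1' ⊓ P false) ⊔ (g1' ⊓ P true))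
    (hiso : ∀ x ∈ g1', ∀ y ∈ g1', B e (br x y) = 0)
    (hmax : ∀ W : Submodule ℂ L, g1' ≤ W → W ≤ g (-1) →
      W = (W ⊓ P false) ⊔ (W ⊓ P true) →
      (∀ x ∈ W, ∀ y ∈ W, B e (br x y) = 0) → W = g1')
    -- m = ⊕_{i ≤ -2} g(i) ⊕ g(-1)'
    (m m' : Submodule ℂ L)
    (hm : m = (⨆ i ∈ Set.Iic (-2 : ℤ), g i) ⊔ g1')
    -- m' = m when dim g(-1)₁ is even; m' = m ⊕ ℂv when dim g(-1)₁ is odd, where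
    -- v ∈ g(-1)₁ is orthogonal to g(-1)' and satisfies ⟨v,v⟩ = 1
    (hm' : (Even (Module.finrank ℂ ↥(g (-1) ⊓ P true)) ∧ m' = m) ∨
      (¬ Even (Module.finrank ℂ ↥(g (-1) ⊓ P true)) ∧ ∃ v : L,
        v ∈ g (-1) ⊓ P true ∧ (∀ y ∈ g1', B e (br v y) = 0) ∧ B e (br v v) = 1 ∧
        m' = m ⊔ Submodule.span ℂ {v})) :
    -- conclusion: m^⊥ = [m', e] ⊕ g^f
    perpSubmodule B m =
        Submodule.map (LinearMap.flip br e) m' ⊔ LinearMap.ker (br f) ∧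
      Disjoint (Submodule.map (LinearMap.flip br e) m') (LinearMap.ker (br f)) :=
  statement3_general br B P hPcompl hbrP hskew hjac g hinternal hgP e h f hgrad he0 hf0 hhe hhf hef
    hBinv hBeven hBnondeg g1' hg1'le hg1'graded hiso hmax m m' hm hm'
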